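/- In the free fermion case, the single-root eigenvalue expression satisfies T̃₁(u,v+i) T̃₁(u,v−i) = ( X(u,v)^{1/2} + (−1)^{N/2−m} X(u,v)^{−1/2} )², where X(u,v) = φ(v+i(u−1))φ(v−i(u−1)) / (φ(v+i(u+1))φ(v−i(u+1))). -/
import Mathlib


/-- Free fermion case `θ = π/2`: `φ(v) = (sinh((π/4)v)/sin(π/2))^{N/2}`. -/
noncomputable def phiFF (N : ℕ) (v : ℂ) : ℂ :=
  (Complex.sinh ((Real.pi / 4 : ℂ) * v) / (Real.sin (Real.pi / 2) : ℂ)) ^ (N / 2)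

/-- `Q(v) = Π_{j=1}^m sinh((π/4)(v - ω_j))`. -/
noncomputable def QFF (m : ℕ) (ω : ℕ → ℂ) (v : ℂ) : ℂ :=
  ∏ j ∈ Finset.range m, Complex.sinh ((Real.pi / 4 : ℂ) * (v - ω j))

/-- `T̃₁(u,v) = (φ(v+iu)/φ(v+i(u+2)) + (-1)^m φ(v-iu)/φ(v-i(u+2))) ⬝ Q(v+2i)/Q(v)`. -/
noncomputable def TtildeFF (N m : ℕ) (ω : ℕ → ℂ) (u v : ℂ) : ℂ :=
  (phiFF N (v + Complex.I * u) / phiFF N (v + Complex.I * (u + 2)) +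
    (-1 : ℂ) ^ m * (phiFF N (v - Complex.I * u) / phiFF N (v - Complex.I * (u + 2)))) *
  (QFF m ω (v + 2 * Complex.I) / QFF m ω v)

/-- `X(u,v) = φ(v+i(u-1))φ(v-i(u-1)) / (φ(v+i(u+1))φ(v-i(u+1)))`. -/
noncomputable def XFF (N : ℕ) (u v : ℂ) : ℂ :=
  phiFF N (v + Complex.I * (u - 1)) * phiFF N (v - Complex.I * (u - 1)) /
    (phiFF N (v + Complex.I * (u + 1)) * phiFF N (v - Complex.I * (u + 1)))

lemma sinh_add_pi_I (z : ℂ) : Complex.sinh (z + Real.pi * Complex.I) = -Complex.sinh z := by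
  rw [Complex.sinh_add, Complex.cosh_mul_I, Complex.sinh_mul_I]
  simp [Complex.cos_pi, Complex.sin_pi]

lemma phi_shift4 (N : ℕ) (w : ℂ) :
    phiFF N (w + 4 * Complex.I) = (-1 : ℂ) ^ (N / 2) * phiFF N w := by
  unfold phiFF
  have h : (Real.pi / 4 : ℂ) * (w + 4 * Complex.I)
      = (Real.pi / 4 : ℂ) * w + Real.pi * Complex.I := by ring
  rw [h, sinh_add_pi_I, neg_div, neg_pow]

lemma Q_shift4 (m : ℕ) (ω : ℕ → ℂ) (w : ℂ) :
    QFF m ω (w + 4 * Complex.I) = (-1 : ℂ) ^ m * QFF m ω w := by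
  unfold QFF
  have h : ∀ j : ℕ, Complex.sinh ((Real.pi / 4 : ℂ) * (w + 4 * Complex.I - ω j))
      = -1 * Complex.sinh ((Real.pi / 4 : ℂ) * (w - ω j)) := by
    intro j
    have h2 : (Real.pi / 4 : ℂ) * (w + 4 * Complex.I - ω j)
        = (Real.pi / 4 : ℂ) * (w - ω j) + Real.pi * Complex.I := by ring
    rw [h2, sinh_add_pi_I]; ring
  simp only [h]
  rw [Finset.prod_mul_distrib, Finset.prod_const, Finset.card_range]

/-- The free-fermion inversion identity:
`T̃₁(u,v+i) T̃₁(u,v-i) = (X^{1/2} + (-1)^{N/2-m} X^{-1/2})²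
  = X + X⁻¹ + 2 (-1)^{N/2-m}`,
asserted wherever the `φ` and `Q` factors in the denominators are nonzero
(`N` even). -/
theorem stmt_18 (N : ℕ) (hN : Even N) (m : ℕ) (ω : ℕ → ℂ) (u v : ℂ)
    (hQ : ∀ k : ℤ, QFF m ω (v + Complex.I * (k : ℂ)) ≠ 0)
    (hφ1 : phiFF N (v + Complex.I * (u + 3)) ≠ 0)
    (hφ2 : phiFF N (v - Complex.I * (u + 1)) ≠ 0)
    (hφ3 : phiFF N (v + Complex.I * (u + 1)) ≠ 0)
    (hφ4 : phiFF N (v - Complex.I * (u + 3)) ≠ 0)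
    (hφ5 : phiFF N (v + Complex.I * (u - 1)) ≠ 0)
    (hφ6 : phiFF N (v - Complex.I * (u - 1)) ≠ 0) :
    TtildeFF N m ω u (v + Complex.I) * TtildeFF N m ω u (v - Complex.I)
      = XFF N u v + (XFF N u v)⁻¹ +
        2 * (-1 : ℂ) ^ ((N : ℤ) / 2 - (m : ℤ)) := by
  obtain ⟨k, hk⟩ := hN
  have hk2 : N = 2 * k := by omega
  have hkN : N / 2 = k := by omega
  -- Q nonzero at v+I and v-I
  have hQ1 : QFF m ω (v + Complex.I) ≠ 0 := by
    have := hQ 1; simpa using this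
  have hQm1 : QFF m ω (v - Complex.I) ≠ 0 := by
    have := hQ (-1); push_cast at this
    rw [show v + Complex.I * (-1) = v - Complex.I by ring] at this; exact this
  -- shift relations
  have hA : phiFF N (v + Complex.I * (u + 3)) = (-1 : ℂ) ^ k * phiFF N (v + Complex.I * (u - 1)) := by
    rw [show v + Complex.I * (u + 3) = (v + Complex.I * (u - 1)) + 4 * Complex.I by ring,
      phi_shift4, hkN]
  have hB : phiFF N (v - Complex.I * (u - 1)) = (-1 : ℂ) ^ k * phiFF N (v - Complex.I * (u + 3)) := by
    rw [show v - Complex.I * (u - 1) = (v - Complex.I * (u + 3)) + 4 * Complex.I by ring,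
      phi_shift4, hkN]
  have hC : QFF m ω (v + 3 * Complex.I) = (-1 : ℂ) ^ m * QFF m ω (v - Complex.I) := by
    rw [show v + 3 * Complex.I = (v - Complex.I) + 4 * Complex.I by ring, Q_shift4]
  -- sign relation
  have hsgn : (-1 : ℂ) ^ ((N : ℤ) / 2 - (m : ℤ)) = (-1 : ℂ) ^ k * (-1 : ℂ) ^ m := by
    have h1 : ((N : ℤ) / 2 - (m : ℤ)) = (k : ℤ) - (m : ℤ) := by omega
    rw [h1, zpow_sub₀ (by norm_num : (-1 : ℂ) ≠ 0), zpow_natCast, zpow_natCast]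
    rcases Nat.even_or_odd m with hm | hm
    · rw [hm.neg_one_pow]; ring
    · rw [hm.neg_one_pow]; ring
  simp only [TtildeFF, XFF]
  rw [show v + Complex.I + Complex.I * u = v + Complex.I * (u + 1) by ring,
    show v + Complex.I + Complex.I * (u + 2) = v + Complex.I * (u + 3) by ring,
    show v + Complex.I - Complex.I * u = v - Complex.I * (u - 1) by ring,
    show v + Complex.I - Complex.I * (u + 2) = v - Complex.I * (u + 1) by ring,
    show v + Complex.I + 2 * Complex.I = v + 3 * Complex.I by ring,
    show v - Complex.I + Complex.I * u = v + Complex.I * (u - 1) by ring,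
    show v - Complex.I + Complex.I * (u + 2) = v + Complex.I * (u + 1) by ring,
    show v - Complex.I - Complex.I * u = v - Complex.I * (u + 1) by ring,
    show v - Complex.I - Complex.I * (u + 2) = v - Complex.I * (u + 3) by ring,
    show v - Complex.I + 2 * Complex.I = v + Complex.I by ring,
    hA, hB, hC, hsgn]
  set P1 := phiFF N (v + Complex.I * (u - 1)) with hP1
  set P2 := phiFF N (v + Complex.I * (u + 1)) with hP2
  set P3 := phiFF N (v - Complex.I * (u + 1)) with hP3
  set P4 := phiFF N (v - Complex.I * (u + 3)) with hP4
  set R1 := QFF m ω (v + Complex.I) with hR1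
  set R2 := QFF m ω (v - Complex.I) with hR2
  rcases Nat.even_or_odd k with hkpar | hkpar <;>
    rcases Nat.even_or_odd m with hmpar | hmpar <;>
    simp only [hkpar.neg_one_pow, hmpar.neg_one_pow, neg_mul, one_mul, mul_neg, div_neg, neg_div, neg_neg] <;>
    field_simp <;> ring
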